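/- Let P = a t² + b t + c ∈ 𝕊[t] with a ≠ 0, coefficients a, b, c linearly independent over ℝ, and identically vanishing norm polynomial P P̄ = 0. Then b is invertible, and h = -b⁻¹ c is a right zero of P, i.e., a h² + b h + c = 0. Consequently P admits a factorization with right factor t - h. -/

import Mathlib

/-!
Write `P̄ = ā t² + b̄ t + c̄`. The five coefficients of `P P̄` vanish. If `b b̄ = 0` they would say
that the norm form `x x̄` and its polarization vanish on `a, b, c`, so `span {a, b, c}` would be a
totally isotropic subspace of dimension 3 for the norm form of signature `(2, 2)`; that is
impossible, because such a subspace meets the negative definite plane `re = imI = 0` trivially.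
Hence `n = b b̄` is a nonzero real, `b⁻¹ = n⁻¹ b̄` and `b h + c = 0` for `h = -b⁻¹ c`, while
`a h² = n⁻² a (b̄ c)²` vanishes by rewriting `a (b̄ c)²` with the coefficient relations.
Finally, as `X` commutes with constants, every right zero `h` of a polynomial over a
noncommutative ring splits off a right factor `X - h`.
-/

open Polynomial

notation "𝕊" => QuaternionAlgebra ℝ (-1) 0 1

open scoped Quaternion

namespace Polynomial

variable {R : Type*}

theorem coeffs_eq_zero_of_quadratic_mul_quadratic_eq_zero [Semiring R] {a b c a' b' c' : R}
    (h : (C a * X ^ 2 + C b * X + C c) * (C a' * X ^ 2 + C b' * X + C c') = 0) :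
    a * a' = 0 ∧ b * a' + a * b' = 0 ∧ c * a' + b * b' + a * c' = 0 ∧
      c * b' + b * c' = 0 ∧ c * c' = 0 := by
  have hcoeff (k : ℕ) := congrArg (coeff · k) h
  simpa [coeff_mul, Finset.Nat.sum_antidiagonal_eq_sum_range_succ_mk, Finset.sum_range_succ,
    coeff_X_pow, coeff_X, coeff_C] using
    (⟨hcoeff 4, hcoeff 3, hcoeff 2, hcoeff 1, hcoeff 0⟩ : _ ∧ _ ∧ _ ∧ _ ∧ _)

theorem exists_eq_mul_X_sub_C_of_eval_eq_zero [Ring R] {p : R[X]} {h : R} (hp : p.eval h = 0) :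
    ∃ q : R[X], p = q * (X - C h) := by
  suffices ∀ p : R[X], ∃ q : R[X], p - C (p.eval h) = q * (X - C h) by
    simpa [hp] using this p
  intro p
  induction p using Polynomial.induction_on' with
  | add p q hp hq =>
    obtain ⟨p', hp'⟩ := hp
    obtain ⟨q', hq'⟩ := hq
    exact ⟨p' + q', by rw [eval_add, C_add, add_mul, ← hp', ← hq']; abel⟩
  | monomial n a =>
    refine ⟨C a * ∑ i ∈ Finset.range n, X ^ i * C h ^ (n - 1 - i), ?_⟩
    rw [mul_assoc, (commute_X (C h)).geom_sum₂_mul, eval_monomial, ← C_mul_X_pow_eq_monomial,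
      mul_sub, C_mul, C_pow]

end Polynomial

namespace QuaternionAlgebra

section CommRing

variable {R : Type*} [CommRing R] {c₁ c₂ c₃ : R}

theorem star_mul_add_star_mul (x y : ℍ[R,c₁,c₂,c₃]) :
    star x * y + star y * x = x * star y + y * star x := by
  ext <;> simp <;> ring

theorem mul_star_mul_sq_eq_zero {a b c : ℍ[R,c₁,c₂,c₃]} (h3 : b * star a + a * star b = 0)
    (h2 : c * star a + b * star b + a * star c = 0) (h1 : c * star b + b * star c = 0)
    (h0 : c * star c = 0) : a * (star b * c) ^ 2 = 0 := by
  have hab : a * star b = -(b * star a) := eq_neg_of_add_eq_zero_right h3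
  have hbc : b * star c = -(c * star b) := eq_neg_of_add_eq_zero_right h1
  have hac : star a * c = -(b * star b) - star c * a := by
    rw [eq_sub_iff_add_eq, star_mul_add_star_mul, eq_neg_iff_add_eq_zero, ← h2]; abel
  have hba : star b * b = b * star b := star_comm_self' b
  have central (x : ℍ[R,c₁,c₂,c₃]) : Commute (b * star b) x := by
    rw [mul_star_eq_coe]; exact coe_commute _ x
  obtain ⟨n, hn⟩ : ∃ n, b * star b = n := ⟨_, rfl⟩
  rw [hn] at hac hba central
  calc a * (star b * c) ^ 2 = -(b * (star a * c) * star b * c) := by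
        rw [show a * (star b * c) ^ 2 = a * star b * (c * star b * c) by noncomm_ring, hab]
        noncomm_ring
    _ = b * n * star b * c + b * star c * (a * star b) * c := by rw [hac]; noncomm_ring
    _ = n * (b * star b) * c + c * (star b * b) * (star a * c) := by
        rw [hbc, hab, ← (central b).eq]; noncomm_ring
    _ = n * n * c - c * (n * n) - c * n * (star c * a) := by rw [hn, hba, hac]; noncomm_ring
    _ = -(n * (c * star c) * a) := by
        rw [← ((central c).mul_left (central c)).eq, ← (central c).eq]; noncomm_ring
    _ = 0 := by rw [h0, mul_zero, zero_mul, neg_zero]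

theorem mul_star_eq_zero_of_mem_span_three {a b c : ℍ[R,c₁,c₂,c₃]} (haa : a * star a = 0)
    (hbb : b * star b = 0) (hcc : c * star c = 0) (hab : b * star a + a * star b = 0)
    (hac : c * star a + a * star c = 0) (hbc : c * star b + b * star c = 0) :
    ∀ x ∈ Submodule.span R (Set.range ![a, b, c]), x * star x = 0 := by
  intro x hx
  obtain ⟨r, rfl⟩ := (Submodule.mem_span_range_iff_exists_fun R).mp hx
  have expand : (∑ i, r i • ![a, b, c] i) * star (∑ i, r i • ![a, b, c] i) =
      (r 0 * r 0) • (a * star a) + (r 0 * r 1) • (b * star a + a * star b) +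
      (r 0 * r 2) • (c * star a + a * star c) + (r 1 * r 1) • (b * star b) +
      (r 1 * r 2) • (c * star b + b * star c) + (r 2 * r 2) • (c * star c) := by
    simp only [Fin.sum_univ_three, Matrix.cons_val_zero, Matrix.cons_val_one, Matrix.cons_val_two,
      Matrix.head_cons, Matrix.tail_cons, star_add, star_smul, mul_add, add_mul, smul_mul_assoc,
      mul_smul_comm, smul_add, smul_smul]
    module
  rw [expand, haa, hbb, hcc, hab, hac, hbc]
  simp

end CommRing

section Field

variable {R : Type*} [Field R] {c₁ c₂ c₃ : R} {b : ℍ[R,c₁,c₂,c₃]}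

theorem inv_re_mul_star_smul_mul_star (hb : (b * star b).re ≠ 0) :
    (b * star b).re⁻¹ • (b * star b) = 1 := by
  have hcoe := mul_star_eq_coe b
  set r := (b * star b).re
  rw [hcoe, smul_coe, inv_mul_cancel₀ hb, coe_one]

theorem mul_smul_star_eq_one (hb : (b * star b).re ≠ 0) :
    b * ((b * star b).re⁻¹ • star b) = 1 := by
  rw [mul_smul_comm, inv_re_mul_star_smul_mul_star hb]

theorem smul_star_mul_eq_one (hb : (b * star b).re ≠ 0) :
    ((b * star b).re⁻¹ • star b) * b = 1 := by
  rw [smul_mul_assoc, star_comm_self', inv_re_mul_star_smul_mul_star hb]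

theorem inverse_eq_smul_star (hb : (b * star b).re ≠ 0) :
    Ring.inverse b = (b * star b).re⁻¹ • star b :=
  Ring.inverse_unit ⟨b, _, mul_smul_star_eq_one hb, smul_star_mul_eq_one hb⟩

theorem isUnit_of_re_mul_star_ne_zero (hb : (b * star b).re ≠ 0) : IsUnit b :=
  ⟨⟨b, _, mul_smul_star_eq_one hb, smul_star_mul_eq_one hb⟩, rfl⟩

end Field

theorem eq_zero_of_mul_star_eq_zero_of_re_eq_zero_of_imI_eq_zero {x : 𝕊} (hx : x * star x = 0)
    (hre : x.re = 0) (himI : x.imI = 0) : x = 0 := by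
  have hnorm : (x * star x).re = x.re ^ 2 + x.imI ^ 2 - x.imJ ^ 2 - x.imK ^ 2 := by
    simp only [re_mul, re_star, imI_star, imJ_star, imK_star]
    ring
  rw [hx, hre, himI, re_zero] at hnorm
  have himJ : x.imJ = 0 := by nlinarith [sq_nonneg x.imJ, sq_nonneg x.imK]
  have himK : x.imK = 0 := by nlinarith [sq_nonneg x.imJ, sq_nonneg x.imK]
  ext <;> simp [hre, himI, himJ, himK]

theorem card_le_two_of_forall_mem_span_mul_star_eq_zero {ι : Type*} [Fintype ι] {v : ι → 𝕊}
    (hv : LinearIndependent ℝ v) (hnull : ∀ x ∈ Submodule.span ℝ (Set.range v), x * star x = 0) :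
    Fintype.card ι ≤ 2 := by
  have hdisj : Disjoint (Submodule.span ℝ (Set.range v))
      (LinearMap.ker ((reₗ (-1 : ℝ) 0 1).prod (imIₗ (-1 : ℝ) 0 1))) := by
    rw [Submodule.disjoint_def]
    intro x hx hker
    simp only [LinearMap.ker_prod, Submodule.mem_inf, LinearMap.mem_ker, reₗ_apply,
      imIₗ_apply] at hker
    exact eq_zero_of_mul_star_eq_zero_of_re_eq_zero_of_imI_eq_zero (hnull x hx) hker.1 hker.2
  simpa using (hv.map hdisj).fintype_card_le_finrank

theorem re_mul_star_ne_zero_of_linearIndependent {a b c : 𝕊}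
    (hindep : LinearIndependent ℝ ![a, b, c]) (h4 : a * star a = 0)
    (h3 : b * star a + a * star b = 0) (h2 : c * star a + b * star b + a * star c = 0)
    (h1 : c * star b + b * star c = 0) (h0 : c * star c = 0) : (b * star b).re ≠ 0 := by
  intro hre
  have hbb : b * star b = 0 := by rw [mul_star_eq_coe, hre, coe_zero]
  rw [hbb, add_zero] at h2
  simpa using card_le_two_of_forall_mem_span_mul_star_eq_zero hindep
    (mul_star_eq_zero_of_mem_span_three h4 hbb h0 h3 h2 h1)

end QuaternionAlgebra

theorem factorization_independent_null_general (a b c : 𝕊)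
    (hindep : LinearIndependent ℝ ![a, b, c])
    (hnorm : (C a * X ^ 2 + C b * X + C c) *
      (C (star a) * X ^ 2 + C (star b) * X + C (star c)) = 0) :
    IsUnit b ∧
    a * (-(Ring.inverse b * c)) ^ 2 + b * (-(Ring.inverse b * c)) + c = 0 ∧
    ∃ Q : Polynomial 𝕊,
      C a * X ^ 2 + C b * X + C c = Q * (X - C (-(Ring.inverse b * c))) := by
  obtain ⟨h4, h3, h2, h1, h0⟩ := coeffs_eq_zero_of_quadratic_mul_quadratic_eq_zero hnorm
  have hb := QuaternionAlgebra.re_mul_star_ne_zero_of_linearIndependent hindep h4 h3 h2 h1 h0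
  have hu := QuaternionAlgebra.isUnit_of_re_mul_star_ne_zero hb
  have hlin : b * (-(Ring.inverse b * c)) + c = 0 := by
    rw [mul_neg, ← mul_assoc, Ring.mul_inverse_cancel b hu, one_mul, neg_add_cancel]
  have hquad : a * (-(Ring.inverse b * c)) ^ 2 = 0 := by
    rw [neg_sq, QuaternionAlgebra.inverse_eq_smul_star hb, smul_mul_assoc, _root_.smul_pow,
      mul_smul_comm, QuaternionAlgebra.mul_star_mul_sq_eq_zero h3 h2 h1 h0, smul_zero]
  have hroot : a * (-(Ring.inverse b * c)) ^ 2 + b * (-(Ring.inverse b * c)) + c = 0 := by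
    rw [add_assoc, hlin, hquad, add_zero]
  refine ⟨hu, hroot, exists_eq_mul_X_sub_C_of_eval_eq_zero ?_⟩
  simpa using hroot

/-- For `P = a t² + b t + c` with `a ≠ 0`, linearly independent coefficients
and vanishing norm polynomial, `b` is invertible and `h = -b⁻¹ c` is a right
zero of `P`; consequently `t - h` is a right factor of `P`. -/
theorem factorization_independent_null (a b c : 𝕊) (ha : a ≠ 0)
    (hindep : LinearIndependent ℝ ![a, b, c])
    (hnorm : (C a * X ^ 2 + C b * X + C c) *
      (C (star a) * X ^ 2 + C (star b) * X + C (star c)) = 0) :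
    IsUnit b ∧
    a * (-(Ring.inverse b * c)) ^ 2 + b * (-(Ring.inverse b * c)) + c = 0 ∧
    ∃ Q : Polynomial 𝕊,
      C a * X ^ 2 + C b * X + C c = Q * (X - C (-(Ring.inverse b * c))) :=
  factorization_independent_null_general a b c hindep hnorm
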